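/- Let z be a normal IEEE 754 float with 2^{e_min} ≤ |z| ≤ 1. Then x_m = |z| ⊗ f_max satisfies x_m ⊘ f_max = |z|, and for every float x' > x_m, x' ⊘ f_max > |z|; hence for every float x' > x_m and every float y, x' ⊘ y ≠ |z|. -/

import Mathlib

open scoped Classical

/-- Finite binary floating-point numbers with precision `p` and exponent range
`[emin, emax]` (subnormals included), viewed as real numbers. -/
def FF (p : ℕ) (emin emax : ℤ) : Set ℝ :=
  {x | ∃ m e : ℤ, |m| < 2 ^ p ∧ emin ≤ e ∧ e ≤ emax ∧
        x = (m : ℝ) * (2 : ℝ) ^ (e + 1 - (p : ℤ))}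

/-- Binary floating-point numbers with precision `p` and unbounded exponent. -/
def FInf (p : ℕ) : Set ℝ :=
  {x | ∃ m e : ℤ, |m| < 2 ^ p ∧ x = (m : ℝ) * (2 : ℝ) ^ e}

/-- `z` has an even least-significant significand bit (canonical representation),
format with bounded exponents. -/
def evenFF (p : ℕ) (emin emax : ℤ) (z : ℝ) : Prop :=
  ∃ m e : ℤ, |m| < 2 ^ p ∧ emin ≤ e ∧ e ≤ emax ∧
    z = (m : ℝ) * (2 : ℝ) ^ (e + 1 - (p : ℤ)) ∧ 2 ∣ m ∧
    ((2 : ℤ) ^ (p - 1) ≤ |m| ∨ e = emin)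

/-- `z` has an odd least-significant significand bit (canonical representation). -/
def oddFF (p : ℕ) (emin emax : ℤ) (z : ℝ) : Prop :=
  ∃ m e : ℤ, |m| < 2 ^ p ∧ emin ≤ e ∧ e ≤ emax ∧
    z = (m : ℝ) * (2 : ℝ) ^ (e + 1 - (p : ℤ)) ∧ ¬ 2 ∣ m ∧
    ((2 : ℤ) ^ (p - 1) ≤ |m| ∨ e = emin)

/-- Evenness of the significand for the unbounded-exponent format. -/
def evenInf (p : ℕ) (z : ℝ) : Prop :=
  ∃ m e : ℤ, z = (m : ℝ) * (2 : ℝ) ^ e ∧ 2 ∣ m ∧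
    (((2 : ℤ) ^ (p - 1) ≤ |m| ∧ |m| < 2 ^ p) ∨ m = 0)

/-- `rnd` is round-to-nearest with ties-to-even onto the set `F` of representable
numbers, `even` being the evenness predicate used to break ties. -/
def IsRNE (F : Set ℝ) (even : ℝ → Prop) (rnd : ℝ → ℝ) : Prop :=
  ∀ x : ℝ, rnd x ∈ F ∧ (∀ y ∈ F, |x - rnd x| ≤ |x - y|) ∧
    (∀ y ∈ F, y ≠ rnd x → |x - rnd x| = |x - y| → even (rnd x))

/-- The successor of `x` in the set `F`. -/
noncomputable def succF (F : Set ℝ) (x : ℝ) : ℝ := sInf {y | y ∈ F ∧ x < y}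

/-- The predecessor of `x` in the set `F`. -/
noncomputable def predF (F : Set ℝ) (x : ℝ) : ℝ := sSup {y | y ∈ F ∧ y < x}

/-- The largest finite float, `f_max = (2 - 2^(1-p)) * 2^emax`. -/
noncomputable def fmax (p : ℕ) (emax : ℤ) : ℝ :=
  (2 - (2 : ℝ) ^ (1 - (p : ℤ))) * (2 : ℝ) ^ emax

/-- The smallest positive (subnormal) float, `f_min = 2^(emin+1-p)`. -/
noncomputable def fminF (p : ℕ) (emin : ℤ) : ℝ := (2 : ℝ) ^ (emin + 1 - (p : ℤ))

section helpers

lemma FF_abs {p emin emax} {z : ℝ} (hz : z ∈ FF p emin emax) : |z| ∈ FF p emin emax := by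
  obtain ⟨m, e, hm, h1, h2, h3⟩ := hz
  refine ⟨|m|, e, by rwa [abs_abs], h1, h2, ?_⟩
  rw [h3, abs_mul, abs_of_pos (a := (2:ℝ) ^ (e + 1 - (p:ℤ))) (by positivity)]
  push_cast; ring

lemma FF_grid {p : ℕ} {emin emax : ℤ} {y : ℝ} (hy : y ∈ FF p emin emax) (E : ℤ)
    (hE : (2:ℝ) ^ E ≤ y) : ∃ k : ℤ, y = (k : ℝ) * (2:ℝ) ^ (E + 1 - (p:ℤ)) := by
  obtain ⟨m, e, hm, h1, h2, h3⟩ := hy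
  by_cases he : E ≤ e
  · refine ⟨m * 2 ^ (e - E).toNat, ?_⟩
    rw [h3]
    push_cast
    rw [mul_assoc, ← zpow_natCast (2:ℝ), Int.toNat_of_nonneg (by omega), ← zpow_add₀ (two_ne_zero)]
    ring_nf
  · exfalso
    have hmr : |(m:ℝ)| < 2 ^ p := by exact_mod_cast hm
    have h4 : y < 2 ^ (e + 1) := by
      calc y ≤ |y| := le_abs_self y
        _ = |(m:ℝ)| * 2 ^ (e + 1 - (p:ℤ)) := by
            rw [h3, abs_mul, abs_of_pos (a := (2:ℝ) ^ (e + 1 - (p:ℤ))) (by positivity)]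
        _ < 2 ^ p * 2 ^ (e + 1 - (p:ℤ)) := mul_lt_mul_of_pos_right hmr (by positivity)
        _ = 2 ^ (e + 1) := by
            rw [← zpow_natCast (2:ℝ), ← zpow_add₀ two_ne_zero]; ring_nf
    have : (2:ℝ) ^ (e+1) ≤ 2 ^ E := zpow_le_zpow_right₀ (by norm_num) (by omega)
    linarith

lemma fmax_eq {p : ℕ} (emax : ℤ) :
    fmax p emax = ((2^p - 1 : ℤ) : ℝ) * (2:ℝ) ^ (emax + 1 - (p:ℤ)) := by
  have e1 : (2:ℝ)^((p:ℤ)) * 2^(emax+1-(p:ℤ)) = 2^(emax+1) := by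
    rw [← zpow_add₀ (two_ne_zero (α := ℝ))]; ring_nf
  have e2 : (2:ℝ)^(1-(p:ℤ)) * 2^emax = 2^(emax+1-(p:ℤ)) := by
    rw [← zpow_add₀ (two_ne_zero (α := ℝ))]; ring_nf
  have e3 : (2:ℝ)^(emax+1) = 2 * 2^emax := by
    rw [zpow_add₀ (two_ne_zero (α := ℝ))]; ring
  unfold fmax
  push_cast
  rw [← zpow_natCast (2:ℝ) p]
  linear_combination -e1 - e2 - e3

lemma FF_le_fmax {p : ℕ} {emin emax : ℤ} {y : ℝ} (hy : y ∈ FF p emin emax) :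
    y ≤ fmax p emax := by
  obtain ⟨m, e, hm, h1, h2, h3⟩ := hy
  have h2p : (1:ℝ) ≤ 2 ^ p := one_le_pow₀ (by norm_num)
  rw [h3, fmax_eq]
  calc (m:ℝ) * 2 ^ (e + 1 - (p:ℤ)) ≤ ((2^p - 1 : ℤ):ℝ) * 2 ^ (e + 1 - (p:ℤ)) := by
        apply mul_le_mul_of_nonneg_right _ (by positivity)
        have : (m:ℤ) ≤ 2^p - 1 := by have := (abs_lt.mp hm).2; omega
        exact_mod_cast this
    _ ≤ ((2^p - 1 : ℤ):ℝ) * 2 ^ (emax + 1 - (p:ℤ)) := by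
        apply mul_le_mul_of_nonneg_left
        · exact zpow_le_zpow_right₀ (by norm_num) (by omega)
        · push_cast; linarith

lemma rnd_self {F : Set ℝ} {even : ℝ → Prop} {rnd : ℝ → ℝ}
    (h : IsRNE F even rnd) {y : ℝ} (hy : y ∈ F) : rnd y = y := by
  have h1 := (h y).2.1 y hy
  have h2 : |y - rnd y| ≤ 0 := by simpa using h1
  have h3 : y - rnd y = 0 := abs_eq_zero.mp (le_antisymm h2 (abs_nonneg _))
  linarith

lemma rnd_unique {F : Set ℝ} {even : ℝ → Prop} {rnd : ℝ → ℝ}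
    (h : IsRNE F even rnd) {x c : ℝ} (hc : c ∈ F)
    (hu : ∀ y ∈ F, y ≠ c → |x - c| < |x - y|) : rnd x = c := by
  by_contra hne
  have h1 := (h x).2.1 c hc
  have h2 := hu (rnd x) (h x).1 hne
  linarith

lemma rnd_mono {F : Set ℝ} {even : ℝ → Prop} {rnd : ℝ → ℝ}
    (h : IsRNE F even rnd) {a b : ℝ} (hab : a ≤ b) : rnd a ≤ rnd b := by
  by_contra hlt
  push_neg at hlt
  have h1 := (h a).2.1 (rnd b) (h b).1
  have h2 := (h b).2.1 (rnd a) (h a).1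
  have ha : rnd a + rnd b ≤ 2 * a := by
    rcases abs_cases (a - rnd a) with ⟨e1, _⟩ | ⟨e1, _⟩ <;>
      rcases abs_cases (a - rnd b) with ⟨e2, _⟩ | ⟨e2, _⟩ <;> linarith
  have hb : 2 * b ≤ rnd a + rnd b := by
    rcases abs_cases (b - rnd b) with ⟨e1, _⟩ | ⟨e1, _⟩ <;>
      rcases abs_cases (b - rnd a) with ⟨e2, _⟩ | ⟨e2, _⟩ <;> linarith
  have hab2 : a = b := by linarith
  rw [hab2] at hlt
  exact lt_irrefl _ hlt

lemma FF_canonical_aux {p : ℕ} (hp : 1 ≤ p) {emin emax : ℤ} {x : ℝ}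
    (hlo : (2:ℝ)^emin ≤ x) :
    ∀ n : ℕ, ∀ m e : ℤ, (e - emin).toNat ≤ n → |m| < 2^p → emin ≤ e → e ≤ emax →
      x = (m:ℝ) * (2:ℝ)^(e+1-(p:ℤ)) →
      ∃ m' e' : ℤ, 2^(p-1) ≤ m' ∧ m' < 2^p ∧ emin ≤ e' ∧ e' ≤ emax ∧
        x = (m':ℝ) * (2:ℝ)^(e'+1-(p:ℤ)) := by
  have hxpos : 0 < x := lt_of_lt_of_le (by positivity) hlo
  have key : ∀ m : ℤ, x = (m:ℝ) * (2:ℝ)^(emin+1-(p:ℤ)) → (2:ℤ)^(p-1) ≤ m := by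
    intro m h3
    have h4 : ((2:ℤ)^(p-1) : ℝ) * (2:ℝ)^(emin+1-(p:ℤ)) ≤ (m:ℝ) * (2:ℝ)^(emin+1-(p:ℤ)) := by
      rw [← h3]
      push_cast
      rw [← zpow_natCast (2:ℝ) (p-1), ← zpow_add₀ (two_ne_zero (α := ℝ))]
      have : ((p:ℤ) - 1) + (emin + 1 - (p:ℤ)) = emin := by ring
      rw [show ((p-1 : ℕ) : ℤ) = (p:ℤ) - 1 by omega, this]
      exact hlo
    have := le_of_mul_le_mul_right h4 (by positivity : (0:ℝ) < (2:ℝ)^(emin+1-(p:ℤ)))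
    exact_mod_cast this
  intro n
  induction n with
  | zero =>
    intro m e h0 hm h1 h2 h3
    have he : e = emin := by omega
    exact ⟨m, e, key m (by rw [← he]; exact h3),
      lt_of_le_of_lt (le_abs_self m) hm, h1, h2, h3⟩
  | succ n ih =>
    intro m e h0 hm h1 h2 h3
    by_cases hc : (2:ℤ)^(p-1) ≤ m
    · exact ⟨m, e, hc, lt_of_le_of_lt (le_abs_self m) hm, h1, h2, h3⟩
    · by_cases he : e = emin
      · exact absurd (key m (by rw [← he]; exact h3)) hc
      · have hmpos : 0 < m := by
          by_contra hmn
          push_neg at hmn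
          have : (m:ℝ) * (2:ℝ)^(e+1-(p:ℤ)) ≤ 0 := by
            apply mul_nonpos_of_nonpos_of_nonneg _ (by positivity)
            exact_mod_cast hmn
          linarith [h3 ▸ hxpos]
        have hm2 : |2*m| < 2^p := by
          rw [abs_lt] at hm ⊢
          have hpp : (2:ℤ)^(p-1) * 2 = 2^p := by
            rw [← pow_succ]; congr 1; omega
          constructor <;> nlinarith [hm.2, hc, hmpos]
        apply ih (2*m) (e-1) (by omega) hm2 (by omega) (by omega)
        rw [h3]
        push_cast
        rw [show e + 1 - (p:ℤ) = (e - 1 + 1 - (p:ℤ)) + 1 by ring,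
          zpow_add₀ (two_ne_zero (α := ℝ))]
        ring

lemma FF_canonical {p : ℕ} (hp : 1 ≤ p) {emin emax : ℤ} {x : ℝ}
    (hx : x ∈ FF p emin emax) (hlo : (2:ℝ)^emin ≤ x) :
    ∃ m e : ℤ, 2^(p-1) ≤ m ∧ m < 2^p ∧ emin ≤ e ∧ e ≤ emax ∧
      x = (m:ℝ) * (2:ℝ)^(e+1-(p:ℤ)) := by
  obtain ⟨m0, e0, hm0, h10, h20, h30⟩ := hx
  exact FF_canonical_aux hp hlo (e0 - emin).toNat m0 e0 le_rfl hm0 h10 h20 h30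

end helpers

/-- For a normal float `z` with `2^emin ≤ |z| ≤ 1`, `x_m = |z| ⊗ f_max` satisfies
`x_m ⊘ f_max = |z|`; every float `x' > x_m` has `x' ⊘ f_max > |z|`, and
`x' ⊘ y ≠ |z|` for every float `y`. -/
theorem div_maxULP_first (p : ℕ) (hp : 2 ≤ p) (emin emax : ℤ)
    (hemin : emin ≤ 0) (hemax : 1 ≤ emax)
    (rnd : ℝ → ℝ)
    (hrnd : IsRNE (FF p emin emax) (evenFF p emin emax) rnd)
    (z : ℝ) (hz : z ∈ FF p emin emax)
    (hlo : (2 : ℝ) ^ emin ≤ |z|) (hhi : |z| ≤ 1)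
    (xm : ℝ) (hxm : xm = rnd (|z| * fmax p emax)) :
    rnd (xm / fmax p emax) = |z| ∧
      (∀ x' ∈ FF p emin emax, xm < x' → |z| < rnd (x' / fmax p emax)) ∧
      (∀ x' ∈ FF p emin emax, xm < x' →
        ∀ y ∈ FF p emin emax, rnd (x' / y) ≠ |z|) := by
  have hpz : (1:ℕ) ≤ p := by omega
  have pw : ∀ a b c : ℤ, a + b = c → (2:ℝ)^a * (2:ℝ)^b = (2:ℝ)^c := by
    intro a b c h
    rw [← zpow_add₀ (two_ne_zero (α := ℝ)), h]
  have h2Q : (2:ℤ)^p = 2^(p-1) * 2 := by rw [← pow_succ]; congr 1; omega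
  have hQ2 : (2:ℤ) ≤ 2^(p-1) := by
    calc (2:ℤ) = 2^1 := (pow_one 2).symm
      _ ≤ 2^(p-1) := pow_le_pow_right₀ (by norm_num) (by omega)
  have hMpos : (0:ℤ) < 2^p - 1 := by omega
  have hzpos : (0:ℝ) < |z| := lt_of_lt_of_le (by positivity) hlo
  have hfmax := fmax_eq (p := p) emax
  have hfmaxpos : 0 < fmax p emax := by
    rw [hfmax]
    exact mul_pos (by exact_mod_cast hMpos) (by positivity)
  have hfne : fmax p emax ≠ 0 := ne_of_gt hfmaxpos
  -- cast helpers : natural powers of (2:ℝ) into zpow form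
  have cPn : (2:ℝ)^(p:ℕ) = (2:ℝ)^((p:ℤ)) := (zpow_natCast (2:ℝ) p).symm
  have cQn : (2:ℝ)^(p-1:ℕ) = (2:ℝ)^((p:ℤ)-1) := by
    rw [← zpow_natCast (2:ℝ) (p-1)]
    congr 1
    omega
  have absg : ∀ (a E : ℤ), |(a:ℝ) * (2:ℝ)^E| = ((|a| : ℤ):ℝ) * (2:ℝ)^E := by
    intro a E
    rw [abs_mul, abs_of_pos (a := (2:ℝ)^E) (by positivity), Int.cast_abs]
  -- canonical representation of |z|
  obtain ⟨m, e, hm1, hm2, he1, he2, hzeq⟩ := FF_canonical hpz (FF_abs hz) hlo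
  have h2m : (2:ℤ)^p ≤ 2*m := by omega
  have hδpos : (0:ℝ) < (2:ℝ)^(e+1-(p:ℤ)) := by positivity
  have he0 : e ≤ 0 := by
    have h1 : (2:ℝ)^e ≤ (m:ℝ) * (2:ℝ)^(e+1-(p:ℤ)) := by
      calc (2:ℝ)^e = ((2^(p-1):ℤ) : ℝ) * (2:ℝ)^(e+1-(p:ℤ)) := by
            push_cast [cQn]; rw [pw ((p:ℤ)-1) (e+1-(p:ℤ)) e (by ring)]
        _ ≤ _ := mul_le_mul_of_nonneg_right (by exact_mod_cast hm1) (le_of_lt hδpos)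
    have h2 : (2:ℝ)^e ≤ 1 := le_trans h1 (le_trans (le_of_eq hzeq.symm) hhi)
    by_contra hgt
    push_neg at hgt
    have h3 : (2:ℝ)^(0:ℤ) < (2:ℝ)^e := zpow_lt_zpow_right₀ (by norm_num) (by omega)
    rw [zpow_zero] at h3
    linarith
  have hABC : (2:ℝ)^((p:ℤ)) * ((2:ℝ)^(e+1-(p:ℤ)) * (2:ℝ)^(emax+1-(p:ℤ)))
      = (2:ℝ)^(e+emax+2-(p:ℤ)) := by
    rw [pw (e+1-(p:ℤ)) (emax+1-(p:ℤ)) (e+emax+2-2*(p:ℤ)) (by ring), pw ((p:ℤ)) (e+emax+2-2*(p:ℤ)) (e+emax+2-(p:ℤ)) (by ring)]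
  -- the exact product
  have hxval : |z| * fmax p emax = ((m * (2^p - 1) : ℤ):ℝ) * (2:ℝ)^(e+emax+2-2*(p:ℤ)) := by
    rw [hzeq, hfmax]
    push_cast [cPn]
    linear_combination (m:ℝ) * ((2:ℝ)^((p:ℤ)) - 1) *
      pw (e+1-(p:ℤ)) (emax+1-(p:ℤ)) (e+emax+2-2*(p:ℤ)) (by ring)
  have hMr : (0:ℝ) < ((2^p - 1 : ℤ):ℝ) := by exact_mod_cast hMpos
  have hzMr : |z| * ((2^p-1:ℤ):ℝ) = ((m*(2^p-1):ℤ):ℝ) * (2:ℝ)^(e+1-(p:ℤ)) := by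
    rw [hzeq]; push_cast; ring
  -- key per-case facts
  have key : rnd (xm / fmax p emax) = |z| ∧ 0 < xm ∧
      ∀ x' ∈ FF p emin emax, xm < x' → (m:ℝ) * (2:ℝ)^(e+emax+2-(p:ℤ)) ≤ x' := by
    rcases eq_or_lt_of_le hm1 with hA | hA
    · -- Case B : m = 2^(p-1), |z| is a power of two
      have hmQ : m = 2^(p-1) := hA.symm
      have hxFF : |z| * fmax p emax ∈ FF p emin emax := by
        refine ⟨2^p - 1, e + emax, by rw [abs_of_pos hMpos]; omega, by omega, by omega, ?_⟩
        rw [hxval, hmQ]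
        push_cast [cQn, cPn]
        linear_combination ((2:ℝ)^((p:ℤ)) - 1) *
          pw ((p:ℤ)-1) (e+emax+2-2*(p:ℤ)) (e+emax+1-(p:ℤ)) (by ring)
      have hxmx : xm = |z| * fmax p emax := by rw [hxm, rnd_self hrnd hxFF]
      refine ⟨?_, ?_, ?_⟩
      · rw [hxmx, mul_div_assoc, div_self hfne, mul_one]
        exact rnd_self hrnd (FF_abs hz)
      · rw [hxmx]; exact mul_pos hzpos hfmaxpos
      · intro x' hx' hgt
        have hδ2 : (0:ℝ) < (2:ℝ)^(e+emax+1-(p:ℤ)) := by positivity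
        have hxmval : xm = ((2^p - 1 : ℤ):ℝ) * (2:ℝ)^(e+emax+1-(p:ℤ)) := by
          rw [hxmx, hxval, hmQ]
          push_cast [cQn, cPn]
          linear_combination ((2:ℝ)^((p:ℤ)) - 1) *
            pw ((p:ℤ)-1) (e+emax+2-2*(p:ℤ)) (e+emax+1-(p:ℤ)) (by ring)
        have hge : (2:ℝ)^(e+emax) ≤ x' := by
          have h1 : (2:ℝ)^(e+emax) = ((2^(p-1):ℤ):ℝ) * (2:ℝ)^(e+emax+1-(p:ℤ)) := by
            push_cast [cQn]; rw [pw ((p:ℤ)-1) (e+emax+1-(p:ℤ)) (e+emax) (by ring)]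
          have h2 : ((2^(p-1):ℤ):ℝ) ≤ ((2^p - 1:ℤ):ℝ) := by
            exact_mod_cast (by omega : (2:ℤ)^(p-1) ≤ 2^p - 1)
          calc (2:ℝ)^(e+emax) ≤ ((2^p-1:ℤ):ℝ) * (2:ℝ)^(e+emax+1-(p:ℤ)) := by
                rw [h1]; exact mul_le_mul_of_nonneg_right h2 (le_of_lt hδ2)
            _ = xm := hxmval.symm
            _ ≤ x' := le_of_lt hgt
        obtain ⟨k, hk⟩ := FF_grid hx' (e+emax) hge
        have hkgt : ((2^p - 1 : ℤ):ℝ) < (k:ℝ) := by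
          have hb := hgt
          rw [hxmval, hk] at hb
          exact lt_of_mul_lt_mul_right hb (le_of_lt hδ2)
        have hkge : (2:ℤ)^p ≤ k := by
          have : (2^p - 1 : ℤ) < k := by exact_mod_cast hkgt
          omega
        rw [hk, hmQ]
        calc ((2^(p-1):ℤ):ℝ) * (2:ℝ)^(e+emax+2-(p:ℤ))
            = ((2^p:ℤ) : ℝ) * (2:ℝ)^(e+emax+1-(p:ℤ)) := by
              push_cast [cQn, cPn]
              linear_combination pw ((p:ℤ)-1) (e+emax+2-(p:ℤ)) (e+emax+1) (by ring)
                - pw ((p:ℤ)) (e+emax+1-(p:ℤ)) (e+emax+1) (by ring)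
          _ ≤ (k:ℝ) * (2:ℝ)^(e+emax+1-(p:ℤ)) := by
              apply mul_le_mul_of_nonneg_right _ (le_of_lt hδ2)
              exact_mod_cast hkge
    · -- Case A : 2^(p-1) < m
      have hA1 : 2^(p-1) + 1 ≤ m := hA
      have heneg : e ≤ -1 := by
        have h1 : (2:ℝ)^e < (m:ℝ) * (2:ℝ)^(e+1-(p:ℤ)) := by
          calc (2:ℝ)^e = ((2^(p-1):ℤ) : ℝ) * (2:ℝ)^(e+1-(p:ℤ)) := by
                push_cast [cQn]; rw [pw ((p:ℤ)-1) (e+1-(p:ℤ)) e (by ring)]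
            _ < _ := mul_lt_mul_of_pos_right (by exact_mod_cast hA) hδpos
        have h2 : (2:ℝ)^e < 1 := lt_of_lt_of_le h1 (le_trans (le_of_eq hzeq.symm) hhi)
        by_contra hgt
        push_neg at hgt
        have h3 : (2:ℝ)^(0:ℤ) ≤ (2:ℝ)^e := zpow_le_zpow_right₀ (by norm_num) (by omega)
        rw [zpow_zero] at h3
        linarith
      have hg2 : (0:ℝ) < (2:ℝ)^(e+emax+2-2*(p:ℤ)) := by positivity
      have hG1 : (0:ℝ) < (2:ℝ)^(e+emax+2-(p:ℤ)) := by positivity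
      have hxmvFF : ((m - 1 : ℤ):ℝ) * (2:ℝ)^(e+emax+2-(p:ℤ)) ∈ FF p emin emax := by
        refine ⟨m - 1, e + emax + 1, by rw [abs_of_pos (by omega)]; omega, by omega, by omega, ?_⟩
        rw [show e+emax+1+1-(p:ℤ) = e+emax+2-(p:ℤ) by ring]
      have hxmvg : ((m - 1 : ℤ):ℝ) * (2:ℝ)^(e+emax+2-(p:ℤ))
          = (((m-1) * 2^p : ℤ):ℝ) * (2:ℝ)^(e+emax+2-2*(p:ℤ)) := by
        push_cast [cPn]
        linear_combination (-((m:ℝ) - 1)) * pw ((p:ℤ)) (e+emax+2-2*(p:ℤ)) (e+emax+2-(p:ℤ)) (by ring)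
      have hxmge : (2:ℝ)^(e+emax+1) ≤ ((m - 1 : ℤ):ℝ) * (2:ℝ)^(e+emax+2-(p:ℤ)) := by
        have h1 : (2:ℝ)^(e+emax+1) = ((2^(p-1):ℤ):ℝ) * (2:ℝ)^(e+emax+2-(p:ℤ)) := by
          push_cast [cQn]; rw [pw ((p:ℤ)-1) (e+emax+2-(p:ℤ)) (e+emax+1) (by ring)]
        rw [h1]
        exact mul_le_mul_of_nonneg_right
          (by exact_mod_cast (by omega : (2:ℤ)^(p-1) ≤ m - 1)) (le_of_lt hG1)
      have hxmeq : xm = ((m - 1 : ℤ):ℝ) * (2:ℝ)^(e+emax+2-(p:ℤ)) := by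
        rw [hxm]
        apply rnd_unique hrnd hxmvFF
        intro y hy hne
        have hdist : |z| * fmax p emax - ((m - 1 : ℤ):ℝ) * (2:ℝ)^(e+emax+2-(p:ℤ))
            = ((2^p - m : ℤ):ℝ) * (2:ℝ)^(e+emax+2-2*(p:ℤ)) := by
          rw [hxval, hxmvg]
          push_cast
          ring
        have hdpos : (0:ℝ) < ((2^p - m : ℤ):ℝ) * (2:ℝ)^(e+emax+2-2*(p:ℤ)) :=
          mul_pos (by exact_mod_cast (by omega : (0:ℤ) < 2^p - m)) hg2
        have habs : |(|z| * fmax p emax) - ((m - 1 : ℤ):ℝ) * (2:ℝ)^(e+emax+2-(p:ℤ))|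
            = ((2^p - m : ℤ):ℝ) * (2:ℝ)^(e+emax+2-2*(p:ℤ)) := by
          rw [hdist]
          exact abs_of_pos hdpos
        rw [habs]
        by_cases hyc : y < (2:ℝ)^(e+emax+1)
        · have h1 : y < ((m - 1 : ℤ):ℝ) * (2:ℝ)^(e+emax+2-(p:ℤ)) := lt_of_lt_of_le hyc hxmge
          have h2 : ((2^p - m : ℤ):ℝ) * (2:ℝ)^(e+emax+2-2*(p:ℤ)) < |z| * fmax p emax - y := by
            linarith [hdist]
          exact lt_of_lt_of_le h2 (le_abs_self _)
        · push_neg at hyc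
          obtain ⟨k, hk⟩ := FF_grid hy (e+emax+1) hyc
          rw [show e+emax+1+1-(p:ℤ) = e+emax+2-(p:ℤ) by ring] at hk
          have hkne : k ≠ m - 1 := by
            intro hkm
            apply hne
            rw [hk, hkm]
          have hyg : y = ((k * 2^p : ℤ):ℝ) * (2:ℝ)^(e+emax+2-2*(p:ℤ)) := by
            rw [hk]
            push_cast [cPn]
            linear_combination (-(k:ℝ)) * pw ((p:ℤ)) (e+emax+2-2*(p:ℤ)) (e+emax+2-(p:ℤ)) (by ring)
          have hdiff : |z| * fmax p emax - y
              = ((m * (2^p-1) - k * 2^p : ℤ):ℝ) * (2:ℝ)^(e+emax+2-2*(p:ℤ)) := by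
            rw [hxval, hyg]; push_cast; ring
          have hint : (2^p - m : ℤ) < |m * (2^p-1) - k * 2^p| := by
            rcases le_or_gt k (m-2) with hle | hlt
            · have h4 : 2 * 2^p ≤ (m - k) * 2^p :=
                mul_le_mul_of_nonneg_right (by omega : (2:ℤ) ≤ m - k) (by positivity)
              have h5 : (m * (2^p-1) - k * 2^p : ℤ) = (m - k) * 2^p - m := by ring
              have h6 : (2^p : ℤ) - m < (m-k) * 2^p - m := by omega
              calc (2^p - m : ℤ) < (m-k) * 2^p - m := h6
                _ = m * (2^p-1) - k * 2^p := h5.symm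
                _ ≤ |m * (2^p-1) - k * 2^p| := le_abs_self _
            · have h3 : (0:ℤ) ≤ (k - m) * 2^p :=
                mul_nonneg (by omega) (by positivity)
              have h5 : -(m * (2^p-1) - k * 2^p : ℤ) = (k - m) * 2^p + m := by ring
              have h6 : (2^p : ℤ) - m < (k - m) * 2^p + m := by omega
              calc (2^p - m : ℤ) < (k-m) * 2^p + m := h6
                _ = -(m * (2^p-1) - k * 2^p) := h5.symm
                _ ≤ |m * (2^p-1) - k * 2^p| := neg_le_abs _
          rw [hdiff, absg]
          exact mul_lt_mul_of_pos_right (by exact_mod_cast hint) hg2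
      have hxmpos : (0:ℝ) < xm := by
        rw [hxmeq]
        exact mul_pos (by exact_mod_cast (by omega : (0:ℤ) < m - 1)) hG1
      refine ⟨?_, hxmpos, ?_⟩
      · -- rnd (xm / fmax) = |z|
        have hx1 : xm / fmax p emax * ((2^p - 1 : ℤ):ℝ)
            = (((m-1) * 2^p : ℤ):ℝ) * (2:ℝ)^(e+1-(p:ℤ)) := by
          rw [div_mul_eq_mul_div, div_eq_iff hfne, hxmeq, hfmax]
          push_cast [cPn]
          linear_combination (-((m:ℝ)-1)) * ((2:ℝ)^((p:ℤ)) - 1) * hABC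
        apply rnd_unique hrnd (FF_abs hz)
        intro y hy hne
        have hd : (xm / fmax p emax - |z|) * ((2^p-1:ℤ):ℝ)
            = ((m - 2^p : ℤ):ℝ) * (2:ℝ)^(e+1-(p:ℤ)) := by
          rw [sub_mul, hx1, hzMr]; push_cast; ring
        have hDabs : (abs (xm / fmax p emax - |z|)) * ((2^p-1:ℤ):ℝ)
            = ((2^p - m : ℤ):ℝ) * (2:ℝ)^(e+1-(p:ℤ)) := by
          rw [← abs_of_pos hMr, ← abs_mul, hd, absg,
            show |m - 2^p| = -(m - 2^p) from abs_of_neg (by omega),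
            show (-(m - 2^p) : ℤ) = 2^p - m by ring]
        rw [← mul_lt_mul_iff_of_pos_right hMr, hDabs]
        by_cases hyc : y < (2:ℝ)^e
        · -- y below the binade of |z|
          have hy2 : y * ((2^p-1:ℤ):ℝ) < ((2^(p-1)*(2^p-1) : ℤ):ℝ) * (2:ℝ)^(e+1-(p:ℤ)) := by
            have h1 : (2:ℝ)^e * ((2^p-1:ℤ):ℝ) = ((2^(p-1)*(2^p-1) : ℤ):ℝ) * (2:ℝ)^(e+1-(p:ℤ)) := by
              push_cast [cQn, cPn]
              linear_combination (-((2:ℝ)^((p:ℤ)) - 1)) * pw ((p:ℤ)-1) (e+1-(p:ℤ)) e (by ring)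
            rw [← h1]
            exact mul_lt_mul_of_pos_right hyc hMr
          have hiy : (2^p - m : ℤ) < (m-1)*2^p - 2^(p-1)*(2^p-1) := by
            rw [h2Q]
            nlinarith [mul_nonneg (by omega : (0:ℤ) ≤ m - 2^(p-1) - 1)
              (by positivity : (0:ℤ) ≤ (2:ℤ)^(p-1))]
          have h7 : ((2^p - m : ℤ):ℝ) * (2:ℝ)^(e+1-(p:ℤ))
              < (xm / fmax p emax - y) * ((2^p-1:ℤ):ℝ) := by
            have h8 : (((m-1)*2^p : ℤ):ℝ) - ((2^(p-1)*(2^p-1) : ℤ):ℝ)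
                = (((m-1)*2^p - 2^(p-1)*(2^p-1) : ℤ):ℝ) := by push_cast; ring
            have h9 : ((2^p - m : ℤ):ℝ) * (2:ℝ)^(e+1-(p:ℤ))
                < (((m-1)*2^p - 2^(p-1)*(2^p-1) : ℤ):ℝ) * (2:ℝ)^(e+1-(p:ℤ)) :=
              mul_lt_mul_of_pos_right (by exact_mod_cast hiy) hδpos
            calc ((2^p - m : ℤ):ℝ) * (2:ℝ)^(e+1-(p:ℤ))
                < (((m-1)*2^p - 2^(p-1)*(2^p-1) : ℤ):ℝ) * (2:ℝ)^(e+1-(p:ℤ)) := h9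
              _ ≤ (xm / fmax p emax - y) * ((2^p-1:ℤ):ℝ) := by
                  rw [sub_mul (xm / fmax p emax) y ((2^p-1:ℤ):ℝ), hx1]
                  push_cast
                  push_cast at hy2
                  linarith
          calc ((2^p - m : ℤ):ℝ) * (2:ℝ)^(e+1-(p:ℤ))
              < (xm / fmax p emax - y) * ((2^p-1:ℤ):ℝ) := h7
            _ ≤ |xm / fmax p emax - y| * ((2^p-1:ℤ):ℝ) :=
                mul_le_mul_of_nonneg_right (le_abs_self _) (le_of_lt hMr)
        · push_neg at hyc
          obtain ⟨k, hk⟩ := FF_grid hy e hyc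
          have hkne : k ≠ m := by
            intro hkm
            apply hne
            rw [hk, hkm, ← hzeq]
          have hyMr : y * ((2^p-1:ℤ):ℝ) = ((k*(2^p-1) : ℤ):ℝ) * (2:ℝ)^(e+1-(p:ℤ)) := by
            rw [hk]; push_cast; ring
          have he9 : (xm / fmax p emax - y) * ((2^p-1:ℤ):ℝ)
              = (((m-1)*2^p - k*(2^p-1) : ℤ):ℝ) * (2:ℝ)^(e+1-(p:ℤ)) := by
            rw [sub_mul, hx1, hyMr]; push_cast; ring
          have hint2 : (2^p - m : ℤ) < |(m-1)*2^p - k*(2^p-1)| := by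
            rcases le_or_gt k (m-1) with hle | hlt
            · have h3 : (0:ℤ) ≤ (m-1-k)*(2^p-1) := mul_nonneg (by omega) (by omega)
              have h5 : ((m-1)*2^p - k*(2^p-1) : ℤ) = (m-1-k)*(2^p-1) + (m-1) := by ring
              calc (2^p - m:ℤ) < (m-1-k)*(2^p-1) + (m-1) := by omega
                _ = (m-1)*2^p - k*(2^p-1) := h5.symm
                _ ≤ |(m-1)*2^p - k*(2^p-1)| := le_abs_self _
            · have h3 : (2:ℤ) ≤ k - m + 1 := by omega
              have h4 : 2*(2^p-1) ≤ (k-m+1)*(2^p-1) :=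
                mul_le_mul_of_nonneg_right h3 (by omega)
              have h5 : -((m-1)*2^p - k*(2^p-1) : ℤ) = (k-m+1)*(2^p-1) - (m-1) := by ring
              calc (2^p - m:ℤ) < (k-m+1)*(2^p-1) - (m-1) := by omega
                _ = -((m-1)*2^p - k*(2^p-1)) := h5.symm
                _ ≤ |(m-1)*2^p - k*(2^p-1)| := neg_le_abs _
          calc ((2^p - m : ℤ):ℝ) * (2:ℝ)^(e+1-(p:ℤ))
              < ((|(m-1)*2^p - k*(2^p-1)| : ℤ):ℝ) * (2:ℝ)^(e+1-(p:ℤ)) :=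
                mul_lt_mul_of_pos_right (by exact_mod_cast hint2) hδpos
            _ = |(xm / fmax p emax - y) * ((2^p-1:ℤ):ℝ)| := by rw [he9, absg]
            _ = |xm / fmax p emax - y| * ((2^p-1:ℤ):ℝ) := by
                rw [abs_mul, abs_of_pos hMr]
      · intro x' hx' hgt
        rw [hxmeq] at hgt
        have hge : (2:ℝ)^(e+emax+1) ≤ x' := le_trans hxmge (le_of_lt hgt)
        obtain ⟨k, hk⟩ := FF_grid hx' (e+emax+1) hge
        rw [show e+emax+1+1-(p:ℤ) = e+emax+2-(p:ℤ) by ring] at hk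
        have hkgt : ((m-1:ℤ):ℝ) < (k:ℝ) := by
          rw [hk] at hgt
          exact lt_of_mul_lt_mul_right hgt (le_of_lt hG1)
        have hkge : m ≤ k := by
          have : (m - 1 : ℤ) < k := by exact_mod_cast hkgt
          omega
        rw [hk]
        exact mul_le_mul_of_nonneg_right (by exact_mod_cast hkge) (le_of_lt hG1)
  obtain ⟨H1, hxmpos, hsucc⟩ := key
  -- the float just above |z|
  have hc2FF : ((m+1:ℤ):ℝ) * (2:ℝ)^(e+1-(p:ℤ)) ∈ FF p emin emax := by
    by_cases htop : m + 1 < 2^p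
    · exact ⟨m+1, e, by rw [abs_of_pos (by omega)]; exact htop, he1, by omega, rfl⟩
    · have hm1top : m + 1 = 2^p := by omega
      refine ⟨2^(p-1), e+1, by rw [abs_of_pos (by positivity)]; omega, by omega, by omega, ?_⟩
      rw [hm1top]
      push_cast [cPn, cQn]
      linear_combination pw ((p:ℤ)) (e+1-(p:ℤ)) (e+1) (by ring)
        - pw ((p:ℤ)-1) (e+1+1-(p:ℤ)) (e+1) (by ring)
  have H2 : ∀ x' ∈ FF p emin emax, xm < x' → |z| < rnd (x' / fmax p emax) := by
    intro x' hx' hgt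
    have hsx := hsucc x' hx' hgt
    have hmono : rnd ((m:ℝ) * (2:ℝ)^(e+emax+2-(p:ℤ)) / fmax p emax) ≤ rnd (x' / fmax p emax) :=
      rnd_mono hrnd ((div_le_div_iff_of_pos_right hfmaxpos).mpr hsx)
    have ht2 : (m:ℝ) * (2:ℝ)^(e+emax+2-(p:ℤ)) / fmax p emax * ((2^p-1:ℤ):ℝ)
        = ((m * 2^p : ℤ):ℝ) * (2:ℝ)^(e+1-(p:ℤ)) := by
      rw [div_mul_eq_mul_div, div_eq_iff hfne, hfmax]
      push_cast [cPn]
      linear_combination (-(m:ℝ)) * ((2:ℝ)^((p:ℤ)) - 1) * hABC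
    have hc2Mr : ((m+1:ℤ):ℝ) * (2:ℝ)^(e+1-(p:ℤ)) * ((2^p-1:ℤ):ℝ)
        = (((m+1)*(2^p-1) : ℤ):ℝ) * (2:ℝ)^(e+1-(p:ℤ)) := by push_cast; ring
    have hint : |(m * 2^p - (m+1)*(2^p-1) : ℤ)| < m * 2^p - m * (2^p - 1) := by
      rw [show (m * 2^p - (m+1)*(2^p-1) : ℤ) = m - 2^p + 1 by ring,
        show (m * 2^p - m * (2^p-1) : ℤ) = m by ring,
        abs_of_nonpos (by omega)]
      omega
    have hstep : |(m:ℝ) * (2:ℝ)^(e+emax+2-(p:ℤ)) / fmax p emax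
          - ((m+1:ℤ):ℝ) * (2:ℝ)^(e+1-(p:ℤ))|
        < (m:ℝ) * (2:ℝ)^(e+emax+2-(p:ℤ)) / fmax p emax - |z| := by
      rw [← mul_lt_mul_iff_of_pos_right hMr]
      have e1 : ((m:ℝ) * (2:ℝ)^(e+emax+2-(p:ℤ)) / fmax p emax
            - ((m+1:ℤ):ℝ) * (2:ℝ)^(e+1-(p:ℤ))) * ((2^p-1:ℤ):ℝ)
          = ((m * 2^p - (m+1)*(2^p-1) : ℤ):ℝ) * (2:ℝ)^(e+1-(p:ℤ)) := by
        rw [sub_mul, ht2, hc2Mr]; push_cast; ring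
      have e2 : ((m:ℝ) * (2:ℝ)^(e+emax+2-(p:ℤ)) / fmax p emax - |z|) * ((2^p-1:ℤ):ℝ)
          = ((m * 2^p - m*(2^p-1) : ℤ):ℝ) * (2:ℝ)^(e+1-(p:ℤ)) := by
        rw [sub_mul, ht2, hzMr]; push_cast; ring
      calc |(m:ℝ) * (2:ℝ)^(e+emax+2-(p:ℤ)) / fmax p emax
            - ((m+1:ℤ):ℝ) * (2:ℝ)^(e+1-(p:ℤ))| * ((2^p-1:ℤ):ℝ)
          = |((m:ℝ) * (2:ℝ)^(e+emax+2-(p:ℤ)) / fmax p emax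
            - ((m+1:ℤ):ℝ) * (2:ℝ)^(e+1-(p:ℤ))) * ((2^p-1:ℤ):ℝ)| := by
            rw [abs_mul, abs_of_pos hMr]
        _ = ((|m * 2^p - (m+1)*(2^p-1)| : ℤ):ℝ) * (2:ℝ)^(e+1-(p:ℤ)) := by rw [e1, absg]
        _ < ((m * 2^p - m*(2^p-1) : ℤ):ℝ) * (2:ℝ)^(e+1-(p:ℤ)) :=
            mul_lt_mul_of_pos_right (by exact_mod_cast hint) hδpos
        _ = ((m:ℝ) * (2:ℝ)^(e+emax+2-(p:ℤ)) / fmax p emax - |z|) * ((2^p-1:ℤ):ℝ) := e2.symm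
    have h3 := (hrnd ((m:ℝ) * (2:ℝ)^(e+emax+2-(p:ℤ)) / fmax p emax)).2.1 _ hc2FF
    have h4 : |(m:ℝ) * (2:ℝ)^(e+emax+2-(p:ℤ)) / fmax p emax
        - rnd ((m:ℝ) * (2:ℝ)^(e+emax+2-(p:ℤ)) / fmax p emax)|
        < (m:ℝ) * (2:ℝ)^(e+emax+2-(p:ℤ)) / fmax p emax - |z| := lt_of_le_of_lt h3 hstep
    have h5 : |z| < rnd ((m:ℝ) * (2:ℝ)^(e+emax+2-(p:ℤ)) / fmax p emax) := by
      rcases abs_cases ((m:ℝ) * (2:ℝ)^(e+emax+2-(p:ℤ)) / fmax p emax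
        - rnd ((m:ℝ) * (2:ℝ)^(e+emax+2-(p:ℤ)) / fmax p emax)) with ⟨e1', _⟩ | ⟨e1', _⟩ <;>
        linarith
    exact lt_of_lt_of_le h5 hmono
  have h0FF : (0:ℝ) ∈ FF p emin emax :=
    ⟨0, emin, by simpa using (by positivity : (0:ℤ) < 2^p), le_refl _, by omega, by simp⟩
  refine ⟨H1, H2, ?_⟩
  intro x' hx' hgt y hy
  rcases lt_trichotomy y 0 with hy0 | hy0 | hy0
  · have hx'pos : 0 < x' := lt_trans hxmpos hgt
    have ht : x' / y < 0 := div_neg_of_pos_of_neg hx'pos hy0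
    have h3 := (hrnd (x'/y)).2.1 0 h0FF
    have h4 : rnd (x'/y) ≤ 0 := by
      rcases abs_cases (x'/y - rnd (x'/y)) with ⟨e1, _⟩ | ⟨e1, _⟩ <;>
        rcases abs_cases (x'/y - 0) with ⟨e2, _⟩ | ⟨e2, _⟩ <;> linarith
    exact ne_of_lt (lt_of_le_of_lt h4 hzpos)
  · rw [hy0, div_zero, rnd_self hrnd h0FF]
    exact ne_of_lt hzpos
  · have hx'pos : 0 < x' := lt_trans hxmpos hgt
    have hyf : y ≤ fmax p emax := FF_le_fmax hy
    have hdd : x' / fmax p emax ≤ x' / y := by gcongr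
    exact ne_of_gt (lt_of_lt_of_le (H2 x' hx' hgt) (rnd_mono hrnd hdd))
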